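/- Under the hypotheses of the previous relation (L₋S₁ = ΛQ, L₊T₂ = (1/2)S₁ − ΛS₁ + S₁²Q, L₊(ΛQ) = −Q, (S₁,S₁) = −2(Q,T₂)), the solvability condition for the third-order profile equation holds: −(Q, T₂) + (Q, ΛT₂) + 2(Q, Q T₂ S₁) + (Q, S₁³) = 0. -/

import Mathlib

/-!
Pair the equation for `S₁` with `T₂` and the equation for `T₂` with `S₁`. Since `D` is
symmetric, subtracting the two pairings eliminates `D`, and the `Q²`-terms combine to
`2(Q, Q T₂ S₁)`. Skew-adjointness of `Λ` turns `(ΛQ, T₂)` into `-(Q, ΛT₂)` and kills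
`(S₁, ΛS₁)`, and `(S₁, S₁) = -2(Q, T₂)` absorbs what is left.

Symmetry of `D` is Fubini on the Fourier side together with evenness of `|ξ|`;
skew-adjointness of `Λ` is the vanishing of `∫ (x f g)'` for Schwartz `f`, `g`.
-/

open MeasureTheory ComplexConjugate

/-- Fourier multiplier operator with symbol `m`, using the convention
`𝓕u(ξ) = ∫ e^{-iξy} u(y) dy`, `u(x) = (1/2π) ∫ e^{iξx} 𝓕u(ξ) dξ`. -/
noncomputable def fourierMult (m : ℝ → ℂ) (u : ℝ → ℂ) : ℝ → ℂ :=
  fun x => (1 / (2 * (Real.pi : ℂ))) *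
    ∫ ξ : ℝ, m ξ * (∫ y : ℝ, Complex.exp (-Complex.I * (ξ : ℂ) * (y : ℂ)) * u y) *
      Complex.exp (Complex.I * (ξ : ℂ) * (x : ℂ))

/-- The half-wave operator `D = |∇|`, Fourier multiplier with symbol `|ξ|`. -/
noncomputable def Dop : (ℝ → ℂ) → (ℝ → ℂ) :=
  fourierMult (fun ξ => ((|ξ| : ℝ) : ℂ))

/-- The scaling generator `Λf = (1/2)f + x f'`. -/
noncomputable def lam (f : ℝ → ℂ) : ℝ → ℂ :=
  fun x => (1/2 : ℂ) * f x + (x : ℂ) * deriv f x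

open Real SchwartzMap
open scoped FourierTransform

section SchwartzIntegrable

variable {E 𝕜 : Type*} [NormedAddCommGroup E] [NormedSpace ℝ E] [MeasurableSpace E]
  [OpensMeasurableSpace E] [NormedRing 𝕜] [NormedSpace ℝ 𝕜] [SecondCountableTopologyEither E 𝕜]
  {μ : Measure E} {g : E → 𝕜}

theorem MeasureTheory.Integrable.schwartz_mul (hg : Integrable g μ) (f : 𝓢(E, 𝕜)) :
    Integrable (fun x => f x * g x) μ :=
  hg.mul_of_top_right (f.memLp_top μ)

theorem MeasureTheory.Integrable.mul_schwartz (hg : Integrable g μ) (f : 𝓢(E, 𝕜)) :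
    Integrable (fun x => g x * f x) μ :=
  hg.mul_of_top_left (f.memLp_top μ)

end SchwartzIntegrable

theorem smulLeftCLM_ofReal_apply (f : 𝓢(ℝ, ℂ)) (x : ℝ) :
    smulLeftCLM ℂ (fun y : ℝ => (y : ℂ)) f x = x * f x :=
  smulLeftCLM_apply_apply (by fun_prop) f x

noncomputable def lamSchwartz (f : 𝓢(ℝ, ℂ)) : 𝓢(ℝ, ℂ) :=
  (1 / 2 : ℂ) • f + smulLeftCLM ℂ (fun x : ℝ => (x : ℂ)) (derivCLM ℂ ℂ f)

theorem coe_lamSchwartz (f : 𝓢(ℝ, ℂ)) : ⇑(lamSchwartz f) = lam f := by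
  ext x
  simp only [lamSchwartz, lam, add_apply, smul_apply, smulLeftCLM_ofReal_apply, derivCLM_apply,
    smul_eq_mul]

theorem integrable_lam (f : 𝓢(ℝ, ℂ)) : Integrable (lam f) :=
  coe_lamSchwartz f ▸ (lamSchwartz f).integrable

theorem integral_mul_lam_eq_neg (f g : 𝓢(ℝ, ℂ)) :
    ∫ x, f x * lam g x = -∫ x, g x * lam f x := by
  have hderiv (x : ℝ) : HasDerivAt (fun y : ℝ => (y : ℂ) * f y * g y)
      (f x * lam g x + g x * lam f x) x := by
    refine (((hasDerivAt_id x).ofReal_comp.mul (f.hasDerivAt x)).mul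
      (g.hasDerivAt x)).congr_deriv ?_
    simp only [lam, id, Complex.ofReal_one, Pi.mul_apply]
    ring
  have hxfg : Integrable fun y : ℝ => (y : ℂ) * f y * g y := by
    simpa only [smulLeftCLM_ofReal_apply] using
      g.integrable.schwartz_mul (smulLeftCLM ℂ (fun x : ℝ => (x : ℂ)) f)
  have hfg := (integrable_lam g).schwartz_mul f
  have hgf := (integrable_lam f).schwartz_mul g
  rw [eq_neg_iff_add_eq_zero, ← integral_add hfg hgf]
  exact integral_eq_zero_of_hasDerivAt_of_integrable hderiv (hfg.add hgf) hxfg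

noncomputable def fourierAngular (u : ℝ → ℂ) (ξ : ℝ) : ℂ :=
  ∫ y : ℝ, Complex.exp (-Complex.I * (ξ : ℂ) * (y : ℂ)) * u y

theorem fourierAngular_eq_fourier (u : ℝ → ℂ) (ξ : ℝ) :
    fourierAngular u ξ = 𝓕 u (ξ / (2 * π)) := by
  rw [Real.fourier_real_eq_integral_exp_smul, fourierAngular]
  congr 1 with y
  rw [smul_eq_mul]
  congr 2
  push_cast
  field_simp

theorem integral_exp_mul_eq_fourierAngular_neg (u : ℝ → ℂ) (ξ : ℝ) :
    ∫ y : ℝ, Complex.exp (Complex.I * ξ * y) * u y = fourierAngular u (-ξ) := by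
  simp only [fourierAngular, Complex.ofReal_neg, mul_neg, neg_mul, neg_neg]

theorem integrable_abs_mul_fourierAngular (f : 𝓢(ℝ, ℂ)) :
    Integrable fun ξ : ℝ => ((|ξ| : ℝ) : ℂ) * fourierAngular f ξ := by
  have hπ : 2 * π ≠ 0 := by positivity
  have h : Integrable fun η : ℝ => ((|η| : ℝ) : ℂ) * 𝓕 f η := by
    refine ((𝓕 f).integrable_pow_mul volume 1).congr' (by fun_prop) (.of_forall fun η => ?_)
    simp
  refine ((h.comp_div hπ).const_mul (2 * π : ℂ)).congr (.of_forall fun ξ => ?_)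
  simp only [fourierAngular_eq_fourier, fourier_coe, abs_div, abs_of_pos Real.two_pi_pos]
  push_cast
  field_simp

theorem integral_integral_mul_exp_swap {φ g : ℝ → ℂ} (hφ : Integrable φ) (hg : Integrable g) :
    ∫ x : ℝ, (∫ ξ : ℝ, φ ξ * Complex.exp (Complex.I * ξ * x)) * g x
      = ∫ ξ : ℝ, φ ξ * ∫ x : ℝ, Complex.exp (Complex.I * ξ * x) * g x := by
  have hint : Integrable (Function.uncurry fun (x ξ : ℝ) =>
      φ ξ * Complex.exp (Complex.I * ξ * x) * g x) (volume.prod volume) := by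
    refine (hg.mul_prod hφ).congr' ?_ (.of_forall fun ⟨x, ξ⟩ => ?_)
    · exact ((hφ.1.comp_snd.mul (by fun_prop)).mul hg.1.comp_fst)
    · simp only [Function.uncurry_apply_pair, norm_mul, Complex.norm_exp, Complex.mul_re]
      simp [mul_comm]
  calc ∫ x : ℝ, (∫ ξ : ℝ, φ ξ * Complex.exp (Complex.I * ξ * x)) * g x
      = ∫ x : ℝ, ∫ ξ : ℝ, φ ξ * Complex.exp (Complex.I * ξ * x) * g x := by
        simp only [← integral_mul_const]
    _ = ∫ ξ : ℝ, ∫ x : ℝ, φ ξ * Complex.exp (Complex.I * ξ * x) * g x :=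
        integral_integral_swap hint
    _ = ∫ ξ : ℝ, φ ξ * ∫ x : ℝ, Complex.exp (Complex.I * ξ * x) * g x := by
        simp only [mul_assoc, integral_const_mul]

theorem integral_fourierMult_mul {m u g : ℝ → ℂ}
    (hmu : Integrable fun ξ => m ξ * fourierAngular u ξ) (hg : Integrable g) :
    ∫ x, fourierMult m u x * g x
      = 1 / (2 * π) * ∫ ξ, m ξ * fourierAngular u ξ * fourierAngular g (-ξ) := by
  simp only [fourierMult, mul_assoc, integral_const_mul]
  congr 1
  simp only [← mul_assoc]
  simp only [← integral_exp_mul_eq_fourierAngular_neg, ← integral_integral_mul_exp_swap hmu hg]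
  rfl

theorem integral_fourierMult_mul_comm {m u v : ℝ → ℂ} (hm : ∀ ξ, m (-ξ) = m ξ)
    (hu : Integrable u) (hv : Integrable v) (hmu : Integrable fun ξ => m ξ * fourierAngular u ξ)
    (hmv : Integrable fun ξ => m ξ * fourierAngular v ξ) :
    ∫ x, fourierMult m u x * v x = ∫ x, u x * fourierMult m v x := by
  simp only [mul_comm (u _), integral_fourierMult_mul hmu hv, integral_fourierMult_mul hmv hu]
  rw [← integral_neg_eq_self]
  congr 2 with ξ
  rw [hm, neg_neg]
  ring

theorem integral_Dop_mul_comm (f g : 𝓢(ℝ, ℂ)) :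
    ∫ x, Dop f x * g x = ∫ x, f x * Dop g x :=
  integral_fourierMult_mul_comm (by simp) f.integrable g.integrable
    (integrable_abs_mul_fourierAngular f) (integrable_abs_mul_fourierAngular g)

theorem third_order_solvability_general (Q S₁ T₂ : SchwartzMap ℝ ℂ)
    (hS₁ : ∀ x : ℝ, Dop (⇑S₁) x + S₁ x - (Q x)^2 * S₁ x = lam (⇑Q) x)
    (hT₂ : ∀ x : ℝ, Dop (⇑T₂) x + T₂ x - 3 * (Q x)^2 * T₂ x
      = (1/2 : ℂ) * S₁ x - lam (⇑S₁) x + (S₁ x)^2 * Q x)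
    (hrel : (∫ x : ℝ, S₁ x * S₁ x) = -2 * ∫ x : ℝ, Q x * T₂ x) :
    -(∫ x : ℝ, Q x * T₂ x) + (∫ x : ℝ, Q x * lam (⇑T₂) x)
      + 2 * (∫ x : ℝ, Q x * (Q x * T₂ x * S₁ x))
      + (∫ x : ℝ, Q x * (S₁ x)^3) = 0 := by
  have iTΛQ : Integrable fun x => T₂ x * lam Q x := (integrable_lam Q).schwartz_mul T₂
  have iST : Integrable fun x => S₁ x * T₂ x := S₁.integrable.mul_schwartz T₂
  have iSS : Integrable fun x => S₁ x * S₁ x := S₁.integrable.mul_schwartz S₁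
  have iSΛS : Integrable fun x => S₁ x * lam S₁ x := (integrable_lam S₁).schwartz_mul S₁
  have iQQTS : Integrable fun x => Q x * (Q x * T₂ x * S₁ x) :=
    ((T₂.integrable.schwartz_mul Q).mul_schwartz S₁).schwartz_mul Q
  have iQSSS : Integrable fun x => Q x * S₁ x ^ 3 :=
    (((S₁.integrable.schwartz_mul S₁).schwartz_mul S₁).schwartz_mul Q).congr
      (.of_forall fun x => by ring)
  have hS₁T₂ : ∫ x, Dop S₁ x * T₂ x
      = (∫ x, T₂ x * lam Q x) - (∫ x, S₁ x * T₂ x) + ∫ x, Q x * (Q x * T₂ x * S₁ x) := by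
    rw [← integral_sub iTΛQ iST, ← integral_add (by fun_prop) iQQTS]
    exact integral_congr_ae (.of_forall fun x => by linear_combination T₂ x * hS₁ x)
  have hT₂S₁ : ∫ x, S₁ x * Dop T₂ x
      = 1 / 2 * (∫ x, S₁ x * S₁ x) - (∫ x, S₁ x * lam S₁ x) + (∫ x, Q x * S₁ x ^ 3)
        - (∫ x, S₁ x * T₂ x) + 3 * ∫ x, Q x * (Q x * T₂ x * S₁ x) := by
    rw [← integral_const_mul, ← integral_const_mul, ← integral_sub (by fun_prop) iSΛS,
      ← integral_add (by fun_prop) iQSSS, ← integral_sub (by fun_prop) iST,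
      ← integral_add (by fun_prop) (by fun_prop)]
    exact integral_congr_ae (.of_forall fun x => by linear_combination S₁ x * hT₂ x)
  have hΛQT := integral_mul_lam_eq_neg Q T₂
  have hΛSS := integral_mul_lam_eq_neg S₁ S₁
  have hD := integral_Dop_mul_comm S₁ T₂
  linear_combination hΛQT + hS₁T₂ - hT₂S₁ - hD - (1 / 2 : ℂ) * hrel + (1 / 2 : ℂ) * hΛSS

/-- Solvability condition for the third-order profile equation:
under `L₋S₁ = ΛQ`, `L₊T₂ = (1/2)S₁ - ΛS₁ + S₁²Q`, `L₊(ΛQ) = -Q`, and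
`(S₁,S₁) = -2(Q,T₂)`, one has
`-(Q,T₂) + (Q,ΛT₂) + 2(Q, Q T₂ S₁) + (Q, S₁³) = 0`. -/
theorem third_order_solvability (Q S₁ T₂ : SchwartzMap ℝ ℂ)
    (hQreal : ∀ x, (Q x).im = 0) (hS₁real : ∀ x, (S₁ x).im = 0)
    (hT₂real : ∀ x, (T₂ x).im = 0)
    (hQ : ∀ x : ℝ, Dop (⇑Q) x + Q x = (Q x)^3)
    (hS₁ : ∀ x : ℝ, Dop (⇑S₁) x + S₁ x - (Q x)^2 * S₁ x = lam (⇑Q) x)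
    (hT₂ : ∀ x : ℝ, Dop (⇑T₂) x + T₂ x - 3 * (Q x)^2 * T₂ x
      = (1/2 : ℂ) * S₁ x - lam (⇑S₁) x + (S₁ x)^2 * Q x)
    (hLQ : ∀ x : ℝ, Dop (lam (⇑Q)) x + lam (⇑Q) x - 3 * (Q x)^2 * lam (⇑Q) x
      = -Q x)
    (hrel : (∫ x : ℝ, S₁ x * S₁ x) = -2 * ∫ x : ℝ, Q x * T₂ x) :
    -(∫ x : ℝ, Q x * T₂ x) + (∫ x : ℝ, Q x * lam (⇑T₂) x)
      + 2 * (∫ x : ℝ, Q x * (Q x * T₂ x * S₁ x))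
      + (∫ x : ℝ, Q x * (S₁ x)^3) = 0 :=
  third_order_solvability_general Q S₁ T₂ hS₁ hT₂ hrel
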